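/- Let α ∈ (0,1/2) and let γ ≥ 0 be an integer. Then there exist a real number c with 0 < c < (1−α)/k_γ, a real number ε > 0, and a strictly increasing sequence (m_i) of positive integers such that for every i there is no integer a ≥ 1 with a + (γ+1)(4^a−1)/3 ∈ (c·k_γ·f(m_i), k_γ·f(m_i) + ε). -/

import Mathlib

open Filter FirstOrder

noncomputable section

/-! ### The binomial random graph `G(n,p)` -/

/-- The number of edges of a simple graph. -/
noncomputable def edgeCt {n : ℕ} (G : SimpleGraph (Fin n)) : ℕ := Nat.card G.edgeSet

open scoped Classical in
/-- `prob n p Q` is the probability that the binomial random graph `G(n,p)` (on vertex set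
`Fin n`) has property `Q`: the sum over all graphs `G` with `Q G` of
`p^{e(G)} (1-p)^{n(n-1)/2 - e(G)}`. -/
noncomputable def prob (n : ℕ) (p : ℝ) (Q : SimpleGraph (Fin n) → Prop) : ℝ :=
  ∑ G : SimpleGraph (Fin n),
    if Q G then p ^ edgeCt G * (1 - p) ^ (n * (n - 1) / 2 - edgeCt G) else 0

/-- `expec n p W` is the expectation of a real-valued function `W` of the binomial random
graph `G(n,p)`. -/
noncomputable def expec (n : ℕ) (p : ℝ) (W : SimpleGraph (Fin n) → ℝ) : ℝ :=
  ∑ G : SimpleGraph (Fin n),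
    W G * (p ^ edgeCt G * (1 - p) ^ (n * (n - 1) / 2 - edgeCt G))

/-! ### The graphs `W_a^γ` and `W_a^{γ,*}` -/

/-- `ωr r a = (r^a − 1)/(r−1)`, the number of vertices of the perfect `r`-ary tree of
depth `a − 1`. -/
def ωr (r a : ℕ) : ℕ := (r ^ a - 1) / (r - 1)

/-- The depth of the node with (0-based) breadth-first (heap) index `j` in the infinite
`r`-ary tree: the root has index 0, and the parent of node `j ≥ 1` is node `(j−1)/r`. -/
def heapDepth (r : ℕ) : ℕ → ℕ
  | 0 => 0
  | j + 1 => heapDepth r (j / r) + 1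
  decreasing_by exact Nat.lt_succ_of_le (Nat.div_le_self _ _)

/-- The vertex set of `W_a^γ`: the path `F₁` on `a` vertices (`Sum.inl`), together with,
for each of the `(4^a−1)/3` vertices `i` of the perfect 4-ary tree `F₂` (in breadth-first
order), the vertex `(i,0)` of `F₂` itself and the `γ` inner vertices `(i,1),…,(i,γ)` of the
path `P_{γ+2}` joining `i` to the vertex of `F₁` at the same distance from the root. -/
abbrev WVert (γ a : ℕ) := Fin a ⊕ (Fin (ωr 4 a) × Fin (γ + 1))

/-- Base (directed) adjacency relation generating `W_a^γ`: consecutive `F₁`-vertices;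
the last inner path vertex `(i,γ)` is joined to the `F₁`-vertex at depth of `i`;
consecutive vertices along each `P_{γ+2}`; and tree edges of the perfect 4-ary tree
(in heap indexing, `j` is the parent of `i ≥ 1` iff `j = (i−1)/4`). -/
def Wbase (γ a : ℕ) : WVert γ a → WVert γ a → Prop
  | Sum.inl u, Sum.inl v => (v : ℕ) = (u : ℕ) + 1
  | Sum.inl u, Sum.inr iv => (iv.2 : ℕ) = γ ∧ heapDepth 4 (iv.1 : ℕ) = (u : ℕ)
  | Sum.inr _, Sum.inl _ => False
  | Sum.inr iv, Sum.inr jw =>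
      (iv.1 = jw.1 ∧ (jw.2 : ℕ) = (iv.2 : ℕ) + 1) ∨
      ((iv.2 : ℕ) = 0 ∧ (jw.2 : ℕ) = 0 ∧ 1 ≤ (iv.1 : ℕ) ∧ (jw.1 : ℕ) = ((iv.1 : ℕ) - 1) / 4)

/-- The graph `W_a^γ`. -/
def WG (γ a : ℕ) : SimpleGraph (WVert γ a) := SimpleGraph.fromRel (Wbase γ a)

/-- The vertex set of `W_a^{γ,*}` (with `ω₁ = ωr r a`, `ω₂ = ωr r ω₁`), as five pieces:
the path `F₁` on `a` vertices; the tree `F₂` together with the inner vertices of the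
paths `P_{γ+2}` joining `F₂` to `F₁` (pairs `(i,k)`, `k = 0` being the `F₂`-vertex itself);
the `γ` inner vertices of the paths `P_{γ+2}` joining the `i`-th vertex of `F₂` (in
breadth-first order) to the `i`-th vertex of the path `F̃₁`; the path `F̃₁` on `ω₁`
vertices; and the tree `F̃₂` together with the inner vertices of the paths `P_{γ+2}`
joining `F̃₂` to `F̃₁`. -/
abbrev WSVert (γ r a : ℕ) :=
  Fin a ⊕ ((Fin (ωr r a) × Fin (γ + 1)) ⊕ ((Fin (ωr r a) × Fin γ) ⊕
    (Fin (ωr r a) ⊕ (Fin (ωr r (ωr r a)) × Fin (γ + 1)))))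

/-- Base (directed) adjacency relation generating `W_a^{γ,*}`. -/
def WSbase (γ r a : ℕ) : WSVert γ r a → WSVert γ r a → Prop
  | .inl u, .inl v => (v : ℕ) = (u : ℕ) + 1
  | .inl u, .inr (.inl iv) => (iv.2 : ℕ) = γ ∧ heapDepth r (iv.1 : ℕ) = (u : ℕ)
  | .inr (.inl iv), .inr (.inl jw) =>
      (iv.1 = jw.1 ∧ (jw.2 : ℕ) = (iv.2 : ℕ) + 1) ∨
      ((iv.2 : ℕ) = 0 ∧ (jw.2 : ℕ) = 0 ∧ 1 ≤ (iv.1 : ℕ) ∧ (jw.1 : ℕ) = ((iv.1 : ℕ) - 1) / r)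
  | .inr (.inl iv), .inr (.inr (.inl jm)) => (iv.2 : ℕ) = 0 ∧ iv.1 = jm.1 ∧ (jm.2 : ℕ) = 0
  | .inr (.inl iv), .inr (.inr (.inr (.inl d))) => γ = 0 ∧ (iv.2 : ℕ) = 0 ∧ (iv.1 : ℕ) = (d : ℕ)
  | .inr (.inr (.inl im)), .inr (.inr (.inl jm)) => im.1 = jm.1 ∧ (jm.2 : ℕ) = (im.2 : ℕ) + 1
  | .inr (.inr (.inl im)), .inr (.inr (.inr (.inl d))) =>
      (im.2 : ℕ) + 1 = γ ∧ (im.1 : ℕ) = (d : ℕ)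
  | .inr (.inr (.inr (.inl d))), .inr (.inr (.inr (.inl e))) => (e : ℕ) = (d : ℕ) + 1
  | .inr (.inr (.inr (.inl d))), .inr (.inr (.inr (.inr jw))) =>
      (jw.2 : ℕ) = γ ∧ heapDepth r (jw.1 : ℕ) = (d : ℕ)
  | .inr (.inr (.inr (.inr iv))), .inr (.inr (.inr (.inr jw))) =>
      (iv.1 = jw.1 ∧ (jw.2 : ℕ) = (iv.2 : ℕ) + 1) ∨
      ((iv.2 : ℕ) = 0 ∧ (jw.2 : ℕ) = 0 ∧ 1 ≤ (iv.1 : ℕ) ∧ (jw.1 : ℕ) = ((iv.1 : ℕ) - 1) / r)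
  | _, _ => False

/-- The graph `W_a^{γ,*}`. -/
def WSG (γ r a : ℕ) : SimpleGraph (WSVert γ r a) := SimpleGraph.fromRel (WSbase γ r a)

/-- `Vnum γ r a = V_{γ,r}(a) = a + 2(γ+1)ω_r(a) + (γ+1)ω_r(ω_r(a))`,
the number of vertices of `W_a^{γ,*}`. -/
def Vnum (γ r a : ℕ) : ℕ := a + 2 * (γ + 1) * ωr r a + (γ + 1) * ωr r (ωr r a)

/-- `s` is (the vertex set of) an induced copy of `H` in `G`. -/
def IsInducedCopy {V W : Type} (H : SimpleGraph W) (G : SimpleGraph V) (s : Set V) : Prop :=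
  Nonempty (H ≃g G.induce s)

/-! ### The quantities `k_γ` and `f` -/

/-- `kcoef α γ = k_γ = 2(1 − α(γ+2)/(γ+1))`. -/
def kcoef (α : ℝ) (γ : ℕ) : ℝ := 2 * (1 - α * ((γ : ℝ) + 2) / ((γ : ℝ) + 1))

/-- `ff α x = f(x) = x^α · ln x`. -/
def ff (α x : ℝ) : ℝ := x ^ α * Real.log x

/-! ### The language `L_m` and EMSO satisfaction -/

/-- Relation symbols of the language `L_m`: `m` unary symbols and one binary symbol. -/
def LRel (m : ℕ) : ℕ → Type
  | 1 => Fin m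
  | 2 => Unit
  | _ => Empty

/-- The first-order language `L_m`: one binary relation symbol, `m` unary relation symbols
and no function symbols. -/
def Lang (m : ℕ) : Language where
  Functions := fun _ => Empty
  Relations := LRel m

/-- The `L_m`-structure on `Fin n` whose binary relation is adjacency in the graph `G` and
whose `i`-th unary relation is membership in `S i`. -/
def structOf {n m : ℕ} (G : SimpleGraph (Fin n)) (S : Fin m → Set (Fin n)) :
    (Lang m).Structure (Fin n) where
  funMap := fun f _ => Empty.elim f
  RelMap := fun {k} r v =>
    match k, r, v with
    | 1, i, v => v 0 ∈ S i
    | 2, _, v => G.Adj (v 0) (v 1)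
    | 0, r, _ => Empty.elim r
    | (_ + 3), r, _ => Empty.elim r

/-- `G` EMSO-satisfies the `L_m`-sentence `φ`: there are sets `S 0, …, S (m-1)` of vertices
such that the structure on `Fin n` given by adjacency in `G` and membership in the `S i`
satisfies `φ`. -/
def EMSOSat {n m : ℕ} (G : SimpleGraph (Fin n)) (φ : (Lang m).Sentence) : Prop :=
  ∃ S : Fin m → Set (Fin n),
    @FirstOrder.Language.Sentence.Realize (Lang m) (Fin n) (structOf G S) φ

/-! The sizes `g(a) = a + (γ+1)(4^a−1)/3` more than double from one `a` to the next:
`g(a+1) ≥ 2 g(a) + a + 2`. On the other hand `k_γ f(n)` tends to infinity while increasing by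
at most `2 k_γ/(1−α)` per step, because `x^(α−1) log x ≤ 1/(1−α)`. So for every large `a`
some `n` has `2 g(a) ≤ k_γ f(n) < g(a+1) − 1`, and then the window
`(k_γ f(n)/2, k_γ f(n) + 1)` lies strictly between `g(a)` and `g(a+1)`: take `c = 1/2`, `ε = 1`.
Since `k_γ < 2(1−α)`, indeed `1/2 < (1−α)/k_γ`. -/

lemma add_one_rpow_le {p x : ℝ} (hp0 : 0 ≤ p) (hp1 : p ≤ 1) (hx : 0 < x) :
    (x + 1) ^ p ≤ x ^ p + p * (x ^ p / x) := by
  have hbern := rpow_one_add_le_one_add_mul_self (s := 1 / x)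
    (by linarith [one_div_pos.mpr hx]) hp0 hp1
  calc (x + 1) ^ p = x ^ p * (1 + 1 / x) ^ p := by
        rw [← Real.mul_rpow hx.le (by positivity), mul_add, mul_one_div_cancel hx.ne', mul_one]
    _ ≤ x ^ p * (1 + p * (1 / x)) := mul_le_mul_of_nonneg_left hbern (by positivity)
    _ = x ^ p + p * (x ^ p / x) := by ring

lemma rpow_div_self_mul_log_le {p x : ℝ} (hp : p < 1) (hx : 0 < x) :
    x ^ p / x * Real.log x ≤ 1 / (1 - p) := by
  have hprod : x ^ p * x ^ (1 - p) = x := by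
    rw [← Real.rpow_add hx]; norm_num
  calc x ^ p / x * Real.log x ≤ x ^ p / x * (x ^ (1 - p) / (1 - p)) :=
        mul_le_mul_of_nonneg_left (Real.log_le_rpow_div hx.le (by linarith)) (by positivity)
    _ = 1 / (1 - p) := by rw [div_mul_div_comm, hprod]; field_simp

lemma log_add_one_le_log_add_inv {x : ℝ} (hx : 0 < x) :
    Real.log (x + 1) ≤ Real.log x + 1 / x := by
  have hsplit : x + 1 = x * (1 + 1 / x) := by field_simp
  rw [hsplit, Real.log_mul hx.ne' (by positivity)]
  linarith [Real.log_le_sub_one_of_pos (show 0 < 1 + 1 / x by positivity)]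

section ff

variable {α : ℝ}

lemma ff_monotoneOn (hα : 0 ≤ α) : MonotoneOn (ff α) (Set.Ici 1) := by
  intro x (hx : 1 ≤ x) y _ hxy
  exact mul_le_mul (Real.rpow_le_rpow (by linarith) hxy hα)
    (Real.log_le_log (by linarith) hxy) (Real.log_nonneg hx) (Real.rpow_nonneg (by linarith) _)

lemma tendsto_ff_atTop (hα : 0 < α) : Tendsto (ff α) atTop atTop :=
  (tendsto_rpow_atTop hα).atTop_mul_atTop₀ Real.tendsto_log_atTop

lemma ff_add_one_le (hα0 : 0 ≤ α) (hα1 : α < 1) {x : ℝ} (hx : 1 ≤ x) :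
    ff α (x + 1) ≤ ff α x + 2 / (1 - α) := by
  have hx0 : 0 < x := by linarith
  have hsmall : x ^ α / x ≤ 1 := by
    rw [div_le_one hx0]
    simpa using Real.rpow_le_rpow_of_exponent_le hx hα1.le
  have hinv : x ^ α / x * (1 / x) ≤ 1 := by
    simpa using mul_le_one₀ hsmall (by positivity) ((div_le_one hx0).mpr hx)
  have hconst : 1 + α * (1 / (1 - α) + 1) ≤ 2 / (1 - α) := by
    have h1α : 0 < 1 - α := by linarith
    rw [le_div_iff₀ h1α]; field_simp; nlinarith
  calc ff α (x + 1) ≤ (x ^ α + α * (x ^ α / x)) * Real.log (x + 1) :=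
        mul_le_mul_of_nonneg_right (add_one_rpow_le hα0 hα1.le hx0)
          (Real.log_nonneg (by linarith))
    _ = x ^ α * Real.log (x + 1) + α * (x ^ α / x * Real.log (x + 1)) := by ring
    _ ≤ x ^ α * (Real.log x + 1 / x) + α * (x ^ α / x * (Real.log x + 1 / x)) := by
        gcongr <;> exact log_add_one_le_log_add_inv hx0
    _ = ff α x + x ^ α / x + α * (x ^ α / x * Real.log x + x ^ α / x * (1 / x)) := by
        unfold ff; ring
    _ ≤ ff α x + 1 + α * (1 / (1 - α) + 1) := by
        gcongr; exact rpow_div_self_mul_log_le hα1 hx0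
    _ ≤ ff α x + 2 / (1 - α) := by linarith

end ff

lemma exists_le_lt_of_le_add {u : ℕ → ℝ} {n₀ : ℕ} {b D : ℝ}
    (hstep : ∀ n, n₀ ≤ n → u (n + 1) ≤ u n + D) (hstart : u n₀ < b) (hu : Tendsto u atTop atTop) :
    ∃ n, n₀ ≤ n ∧ b - D ≤ u n ∧ u n < b := by
  by_contra! hjump
  have hbelow : ∀ n, n₀ ≤ n → u n < b := by
    intro n hn
    induction n, hn using Nat.le_induction with
    | base => exact hstart
    | succ n hn ih =>
      have hlow : u n < b - D := lt_of_not_ge fun h => (hjump n hn h).not_gt ih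
      linarith [hstep n hn]
  obtain ⟨n, hn₀, hbn⟩ := ((eventually_ge_atTop n₀).and (hu.eventually_ge_atTop b)).exists
  exact (hbelow n hn₀).not_ge hbn

-- `a + (γ+1) ω₄(a)`, the number of vertices of `W_a^γ`
def wOrder (γ a : ℕ) : ℝ := a + ((γ : ℝ) + 1) * ((4 : ℝ) ^ a - 1) / 3

lemma wOrder_nonneg (γ a : ℕ) : 0 ≤ wOrder γ a := by
  have : (1 : ℝ) ≤ 4 ^ a := one_le_pow₀ (by norm_num)
  unfold wOrder; positivity

lemma two_mul_wOrder_add_le (γ a : ℕ) : 2 * wOrder γ a + a + 2 ≤ wOrder γ (a + 1) := by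
  have hbern := one_add_mul_le_pow (show (-2 : ℝ) ≤ 3 by norm_num) a
  norm_num at hbern
  have : (1 : ℝ) ≤ 4 ^ a := one_le_pow₀ (by norm_num)
  unfold wOrder
  push_cast
  rw [pow_succ]
  nlinarith [(γ.cast_nonneg : (0 : ℝ) ≤ γ)]

lemma wOrder_strictMono (γ : ℕ) : StrictMono (wOrder γ) :=
  strictMono_nat_of_lt_succ fun a => by
    linarith [two_mul_wOrder_add_le γ a, wOrder_nonneg γ a, (a.cast_nonneg : (0 : ℝ) ≤ a)]

lemma kcoef_pos {α : ℝ} (hα : α < 1 / 2) (γ : ℕ) : 0 < kcoef α γ := by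
  have hγ : (0 : ℝ) ≤ γ := γ.cast_nonneg
  have : α * ((γ : ℝ) + 2) / ((γ : ℝ) + 1) < 1 := by
    rw [div_lt_one (by positivity)]; nlinarith
  unfold kcoef; linarith

lemma kcoef_lt {α : ℝ} (hα : 0 < α) (γ : ℕ) : kcoef α γ < 2 * (1 - α) := by
  have hγ : (0 : ℝ) ≤ γ := γ.cast_nonneg
  have : α < α * ((γ : ℝ) + 2) / ((γ : ℝ) + 1) := by
    rw [lt_div_iff₀ (by positivity)]; nlinarith
  unfold kcoef; linarith

lemma exists_ff_mem_wOrder_gap {α k : ℝ} (hα0 : 0 < α) (hα1 : α < 1) (hk : 0 < k) (γ : ℕ)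
    {a : ℕ} (ha : k * (2 / (1 - α)) ≤ a) :
    ∃ n : ℕ, 1 ≤ n ∧ 2 * wOrder γ a ≤ k * ff α n ∧ k * ff α n + 1 < wOrder γ (a + 1) := by
  have hgap := two_mul_wOrder_add_le γ a
  have hstep : ∀ n : ℕ, 1 ≤ n → k * ff α ↑(n + 1) ≤ k * ff α n + k * (2 / (1 - α)) := by
    intro n hn
    rw [Nat.cast_succ, ← mul_add]
    exact mul_le_mul_of_nonneg_left (ff_add_one_le hα0.le hα1 (by exact_mod_cast hn)) hk.le
  have hstart : k * ff α ↑(1 : ℕ) < wOrder γ (a + 1) - 1 := by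
    simp only [Nat.cast_one, ff, Real.log_one, mul_zero]
    linarith [wOrder_nonneg γ a]
  have htendsto : Tendsto (fun n : ℕ => k * ff α n) atTop atTop :=
    ((tendsto_ff_atTop hα0).comp tendsto_natCast_atTop_atTop).const_mul_atTop hk
  obtain ⟨n, hn, hlo, hhi⟩ := exists_le_lt_of_le_add hstep hstart htendsto
  exact ⟨n, hn, by linarith, by linarith⟩

lemma wOrder_notMem_Ioo {γ a : ℕ} {x : ℝ} (hlo : 2 * wOrder γ a ≤ x)
    (hhi : x + 1 < wOrder γ (a + 1)) (b : ℕ) : wOrder γ b ∉ Set.Ioo (1 / 2 * x) (x + 1) := by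
  rintro ⟨hxb, hbx⟩
  have hab : a < b := (wOrder_strictMono γ).lt_iff_lt.mp (by linarith)
  have hba : b < a + 1 := (wOrder_strictMono γ).lt_iff_lt.mp (by linarith)
  omega

/-- Let α ∈ (0,1/2) and γ ≥ 0. Then there exist 0 < c < (1−α)/k_γ, ε > 0
and a strictly increasing sequence (m_i) of positive integers such that for every i there
is no integer a ≥ 1 with a + (γ+1)(4^a−1)/3 ∈ (c·k_γ·f(m_i), k_γ·f(m_i) + ε). -/
theorem stmt18 (α : ℝ) (hα0 : 0 < α) (hα : α < 1 / 2) (γ : ℕ) :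
    ∃ c ε : ℝ, ∃ m : ℕ → ℕ,
      0 < c ∧ c < (1 - α) / kcoef α γ ∧ 0 < ε ∧ StrictMono m ∧ (∀ i, 0 < m i) ∧
      ∀ i, ¬ ∃ a : ℕ, 1 ≤ a ∧
        c * kcoef α γ * ff α (m i) < (a : ℝ) + ((γ : ℝ) + 1) * ((4 : ℝ) ^ a - 1) / 3 ∧
        (a : ℝ) + ((γ : ℝ) + 1) * ((4 : ℝ) ^ a - 1) / 3 < kcoef α γ * ff α (m i) + ε := by
  set k := kcoef α γ
  have hk : 0 < k := kcoef_pos hα γ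
  set A := ⌈k * (2 / (1 - α))⌉₊
  choose m hm1 hmlo hmhi using fun i : ℕ =>
    exists_ff_mem_wOrder_gap hα0 (by linarith) hk γ (a := A + i)
      (by exact_mod_cast (Nat.le_ceil _).trans (Nat.cast_le.mpr (Nat.le_add_right A i)))
  refine ⟨1 / 2, 1, m, by norm_num, ?_, one_pos, ?_, hm1, ?_⟩
  · rw [lt_div_iff₀ hk]; linarith [kcoef_lt hα0 γ]
  · refine strictMono_nat_of_lt_succ fun i => lt_of_not_ge fun hle => ?_
    have hnext := hmlo (i + 1)
    rw [← add_assoc] at hnext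
    have hff : k * ff α (m i) < k * ff α (m (i + 1)) := by
      linarith [hmhi i, wOrder_nonneg γ (A + i + 1)]
    exact (lt_of_mul_lt_mul_left hff hk.le).not_ge <|
      ff_monotoneOn hα0.le (Set.mem_Ici.mpr (by exact_mod_cast hm1 (i + 1)))
        (Set.mem_Ici.mpr (by exact_mod_cast hm1 i)) (Nat.cast_le.mpr hle)
  · rintro i ⟨b, -, hlo, hhi⟩
    exact wOrder_notMem_Ioo (hmlo i) (hmhi i) b ⟨by rw [mul_assoc] at hlo; exact hlo, hhi⟩
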